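/- For the grammar with productions S → AB, A → C, B → C, C → aC, C → ε, and input a^n, the Earley algorithm table contains exactly n+1 items of the form [S → A • B] ∈ E_{0,i} (for 0 ≤ i ≤ n) and exactly n+1 items of the form [S → AB •] ∈ E_{0,j} (for 0 ≤ j ≤ n). -/

import Mathlib

/-! Formalization of Earley parsing and the Nederhof–Satta variant. -/

variable {T N : Type}

/-- A context-free grammar: a start nonterminal and a set of productions. -/
structure CFG (T N : Type) where
  initial : N
  rules : Set (N × List (Symbol T N))

/-- One rewriting step of the grammar. -/
def CFG.Produces (g : CFG T N) (u v : List (Symbol T N)) : Prop :=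
  ∃ A α p q, (A, α) ∈ g.rules ∧ u = p ++ [Symbol.nonterminal A] ++ q ∧ v = p ++ α ++ q

/-- The derivation relation ⇒* (reflexive-transitive closure of rewriting). -/
def CFG.Derives (g : CFG T N) : List (Symbol T N) → List (Symbol T N) → Prop :=
  Relation.ReflTransGen g.Produces

/-- The language of the grammar: { w | S ⇒* w }. -/
def CFG.language (g : CFG T N) : Set (List T) :=
  { w | g.Derives [Symbol.nonterminal g.initial] (w.map Symbol.terminal) }

/-- `inputSlice w i j` is the substring a_{i+1}⋯a_j of `w` (0-based: w[i..j)), as symbols. -/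
def inputSlice (w : List T) (i j : ℕ) : List (Symbol T N) :=
  ((w.take j).drop i).map Symbol.terminal

/-- The least Earley table: `Earley g w A α β i j` means the dotted item
[A → α • β] is inserted in E_{i,j}. -/
inductive Earley (g : CFG T N) (w : List T) :
    N → List (Symbol T N) → List (Symbol T N) → ℕ → ℕ → Prop where
  | init {α} : (g.initial, α) ∈ g.rules → Earley g w g.initial [] α 0 0
  | predict {B α A β i j γ} : Earley g w B α (Symbol.nonterminal A :: β) i j →
      (A, γ) ∈ g.rules → Earley g w A [] γ j j
  | scan {A α a β i j} : Earley g w A α (Symbol.terminal a :: β) i j →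
      w[j]? = some a → Earley g w A (α ++ [Symbol.terminal a]) β i (j + 1)
  | complete {A α B β i k γ j} : Earley g w A α (Symbol.nonterminal B :: β) i k →
      Earley g w B γ [] k j → (B, γ) ∈ g.rules →
      Earley g w A (α ++ [Symbol.nonterminal B]) β i j

mutual
  /-- Forward part of the variant: `VarU g w β j` means suffix item [β] ∈ U_j. -/
  inductive VarU (g : CFG T N) (w : List T) : List (Symbol T N) → ℕ → Prop where
    | init {α} : (g.initial, α) ∈ g.rules → VarU g w α 0
    | predict {A β j γ} : VarU g w (Symbol.nonterminal A :: β) j →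
        (A, γ) ∈ g.rules → VarU g w γ j
    | scan {a β j} : VarU g w (Symbol.terminal a :: β) j → w[j]? = some a →
        VarU g w β (j + 1)
    | complete {B β k γ j} : VarU g w (Symbol.nonterminal B :: β) k → (B, γ) ∈ g.rules →
        VarT g w γ k j → VarU g w β j

  /-- Backward part of the variant: `VarT g w β j m` means suffix item [β] ∈ T_{j,m}. -/
  inductive VarT (g : CFG T N) (w : List T) : List (Symbol T N) → ℕ → ℕ → Prop where
    | empty {m} : VarU g w [] m → VarT g w [] m m
    | scan {a β j m} : VarU g w (Symbol.terminal a :: β) j → w[j]? = some a →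
        VarT g w β (j + 1) m → VarT g w (Symbol.terminal a :: β) j m
    | complete {B β k γ j m} : VarU g w (Symbol.nonterminal B :: β) k → (B, γ) ∈ g.rules →
        VarT g w γ k j → VarT g w β j m → VarT g w (Symbol.nonterminal B :: β) k m
end

/-- Nonterminals of the example grammar. -/
inductive NT : Type where
  | S : NT
  | A : NT
  | B : NT
  | C : NT

/-- The example grammar with productions S → AB, A → C, B → C, C → aC, C → ε,
over the single terminal `a` (represented by `()`). -/
def exG : CFG Unit NT where
  initial := NT.S
  rules := {(NT.S, [Symbol.nonterminal NT.A, Symbol.nonterminal NT.B]),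
            (NT.A, [Symbol.nonterminal NT.C]),
            (NT.B, [Symbol.nonterminal NT.C]),
            (NT.C, [Symbol.terminal (), Symbol.nonterminal NT.C]),
            (NT.C, [])}

/-! Every item for `S` has origin `0`, since `S` occurs on no right-hand side and so is never
predicted, and ends at most at `n`. Conversely, chaining scans and completions through
`C → aC` shows that `C` recognizes every segment `[j, k)` of `aⁿ`; hence `A` recognizes `[0, k)`
for every `k ≤ n`, which gives `[S → A • B] ∈ E_{0,k}`, and `B` recognizes the empty segment at
every position, which then gives `[S → AB •] ∈ E_{0,k}`. -/

namespace Earley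

variable {g : CFG T N} {w : List T} {A : N} {α β : List (Symbol T N)} {i j : ℕ}

theorem rule_mem (h : Earley g w A α β i j) : (A, α ++ β) ∈ g.rules := by
  induction h with
  | init hr => exact hr
  | predict _ hr => exact hr
  | scan _ _ ih => simpa using ih
  | complete _ _ _ ih => simpa using ih

theorem le_length (h : Earley g w A α β i j) : j ≤ w.length := by
  induction h with
  | init => exact Nat.zero_le _
  | predict _ _ ih => exact ih
  | scan _ hw => exact (List.getElem?_eq_some_iff.mp hw).1
  | complete _ _ _ _ ih => exact ih

-- Prediction is the only rule that moves the origin, and it never creates an item for the start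
-- symbol when that symbol occurs on no right-hand side.
theorem origin_eq_zero_of_initial
    (hS : ∀ B γ, (B, γ) ∈ g.rules → Symbol.nonterminal g.initial ∉ γ)
    (h : Earley g w g.initial α β i j) : i = 0 := by
  suffices ∀ {A α β i j}, Earley g w A α β i j → A = g.initial → i = 0 from this h rfl
  intro A α β i j h
  induction h with
  | init => exact fun _ => rfl
  | predict hB _ =>
    rintro rfl
    exact absurd (by simp) (hS _ _ hB.rule_mem)
  | scan _ _ ih => exact ih
  | complete _ _ _ ih => exact ih

def Recognized (g : CFG T N) (w : List T) (B : N) (k j : ℕ) : Prop :=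
  ∃ γ, (B, γ) ∈ g.rules ∧ Earley g w B γ [] k j

theorem complete_of_recognized {B : N} {k : ℕ}
    (h : Earley g w A α (Symbol.nonterminal B :: β) i k) (hB : Recognized g w B k j) :
    Earley g w A (α ++ [Symbol.nonterminal B]) β i j :=
  let ⟨_, hr, hγ⟩ := hB
  h.complete hγ hr

end Earley

namespace exG

local notation "ta" => (Symbol.terminal () : Symbol Unit NT)
local notation "nA" => (Symbol.nonterminal NT.A : Symbol Unit NT)
local notation "nB" => (Symbol.nonterminal NT.B : Symbol Unit NT)
local notation "nC" => (Symbol.nonterminal NT.C : Symbol Unit NT)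

theorem rule_S : (NT.S, [nA, nB]) ∈ exG.rules := by simp [exG]
theorem rule_A : (NT.A, [nC]) ∈ exG.rules := by simp [exG]
theorem rule_B : (NT.B, [nC]) ∈ exG.rules := by simp [exG]
theorem rule_C_cons : (NT.C, [ta, nC]) ∈ exG.rules := by simp [exG]
theorem rule_C_nil : (NT.C, ([] : List (Symbol Unit NT))) ∈ exG.rules := by simp [exG]

theorem initial_not_mem_rhs (X : NT) (γ : List (Symbol Unit NT)) (h : (X, γ) ∈ exG.rules) :
    Symbol.nonterminal exG.initial ∉ γ := by
  simp only [exG, Set.mem_insert_iff, Set.mem_singleton_iff, Prod.mk.injEq] at h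
  rcases h with ⟨_, rfl⟩ | ⟨_, rfl⟩ | ⟨_, rfl⟩ | ⟨_, rfl⟩ | ⟨_, rfl⟩ <;> simp [exG]

variable {n i j k : ℕ}

theorem predict_A : Earley exG (List.replicate n ()) NT.A [] [nC] 0 0 :=
  (Earley.init rule_S).predict rule_A

theorem predict_C (hj : j ≤ n) :
    Earley exG (List.replicate n ()) NT.C [] [ta, nC] j j ∧
      Earley exG (List.replicate n ()) NT.C [] [] j j := by
  induction j with
  | zero => exact ⟨predict_A.predict rule_C_cons, predict_A.predict rule_C_nil⟩
  | succ j ih =>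
    have hscan := (ih (by omega)).1.scan (List.getElem?_replicate_of_lt hj)
    exact ⟨hscan.predict rule_C_cons, hscan.predict rule_C_nil⟩

theorem recognized_C (hjk : j ≤ k) (hk : k ≤ n) :
    Earley.Recognized exG (List.replicate n ()) NT.C j k := by
  induction hjk using Nat.decreasingInduction with
  | self => exact ⟨[], rule_C_nil, (predict_C hk).2⟩
  | of_succ j hjk ih =>
    have hscan := (predict_C (hjk.le.trans hk)).1.scan
      (List.getElem?_replicate_of_lt (hjk.trans_le hk))
    exact ⟨[ta, nC], rule_C_cons, hscan.complete_of_recognized ih⟩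

theorem recognized_A (hk : k ≤ n) : Earley.Recognized exG (List.replicate n ()) NT.A 0 k :=
  ⟨[nC], rule_A, predict_A.complete_of_recognized (recognized_C k.zero_le hk)⟩

theorem earley_A_dot_B (hk : k ≤ n) : Earley exG (List.replicate n ()) NT.S [nA] [nB] 0 k :=
  (Earley.init rule_S).complete_of_recognized (recognized_A hk)

theorem recognized_B_nil (hj : j ≤ n) : Earley.Recognized exG (List.replicate n ()) NT.B j j :=
  ⟨[nC], rule_B, ((earley_A_dot_B hj).predict rule_B).complete_of_recognized
    (recognized_C le_rfl hj)⟩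

theorem earley_A_B_dot (hj : j ≤ n) : Earley exG (List.replicate n ()) NT.S [nA, nB] [] 0 j :=
  (earley_A_dot_B hj).complete_of_recognized (recognized_B_nil hj)

theorem origin_eq_zero_and_le {α β : List (Symbol Unit NT)}
    (h : Earley exG (List.replicate n ()) NT.S α β i j) : i = 0 ∧ j ≤ n :=
  ⟨h.origin_eq_zero_of_initial initial_not_mem_rhs, by simpa using h.le_length⟩

end exG

/-- for input a^n, the Earley table contains the item [S → A • B]
in exactly the entries E_{0,i} with 0 ≤ i ≤ n, and the item [S → AB •] in
exactly the entries E_{0,j} with 0 ≤ j ≤ n (hence exactly n+1 of each). -/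
theorem earley_example_counts (n : ℕ) :
    (∀ i j, Earley exG (List.replicate n ()) NT.S
        [Symbol.nonterminal NT.A] [Symbol.nonterminal NT.B] i j ↔ (i = 0 ∧ j ≤ n)) ∧
    (∀ i j, Earley exG (List.replicate n ()) NT.S
        [Symbol.nonterminal NT.A, Symbol.nonterminal NT.B] [] i j ↔ (i = 0 ∧ j ≤ n)) :=
  ⟨fun _ _ => ⟨exG.origin_eq_zero_and_le, fun ⟨hi, hj⟩ => hi ▸ exG.earley_A_dot_B hj⟩,
    fun _ _ => ⟨exG.origin_eq_zero_and_le, fun ⟨hi, hj⟩ => hi ▸ exG.earley_A_B_dot hj⟩⟩
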